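/- For every fixed positive integer k there exist a real constant C and an integer N such that for all integers n ≥ N with n > k + 1, the single-exclusion number satisfies S(n, n−k−1) ≤ (2/(k+1))·binom(n,k) + C·n^{k−1}, where binom(n,k) denotes the binomial coefficient. (That is, S(n,n−k−1) ≤ (2/(k+1) + O(n^{−1}))·binom(n,k) as n → ∞ for fixed k.) -/

import Mathlib

/-- An `(n,t)`-single-exclusion system: a collection of `t`-subsets (blocks) of an
`n`-set such that every subset `X` with `1 ≤ |X| ≤ t+1` has a block containing all
but exactly one element of `X`. -/
def IsSESystem (n t : ℕ) (S : Finset (Finset (Fin n))) : Prop :=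
  (∀ B ∈ S, B.card = t) ∧
  ∀ X : Finset (Fin n), 1 ≤ X.card → X.card ≤ t + 1 → ∃ B ∈ S, (X \ B).card = 1

/-- The `(n,t)`-single-exclusion number `S(n,t)`: the least number of blocks in an
`(n,t)`-single-exclusion system. -/
noncomputable def SENumber (n t : ℕ) : ℕ :=
  sInf {m : ℕ | ∃ S : Finset (Finset (Fin n)), IsSESystem n t S ∧ S.card = m}

/-!
Pass from blocks to their complements, `(k+1)`-sets `A` such that every `Z` with `k ≤ |Z| < n`
has exactly one point of `A` outside it, and work in `ℤ/n`. The `(k+1)`-sets with sum `ρ` or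
`ρ + 1` do this for almost every `Z`: it suffices to find a `k`-set `K ⊆ Z` for which
`ρ - ∑ K` or `ρ + 1 - ∑ K` lies outside `Z`. Averaging over `ρ`, one of these families has at
most `2 binom(n, k+1) / n ≤ 2 binom(n, k) / (k+1)` members.

An uncovered `Z` contains `ρ - ∑ K` and `ρ + 1 - ∑ K` for all its `k`-subsets `K`. Taking `z ∈ Z`
with `z + 1 ∉ Z`, a swap argument shows `ρ - ∑ K ∈ K` whenever `z ∈ K`, and trading single
elements of such a `K` then confines `Z` to a set of `O(k²)` points determined by the
`(k-1)`-set `K \ {ρ - ∑ K}` and one of the at most two halves of `ρ - ∑ (K \ {ρ - ∑ K})`. Hence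
there are `O(n^(k-1))` uncovered `Z`, and one extra block for each of them suffices.
-/

open Finset

namespace SingleExclusion

section Complements

theorem insert_sdiff_eq_singleton {α : Type*} [DecidableEq α] {x : α} {K Z : Finset α}
    (hx : x ∉ Z) (hK : K ⊆ Z) : insert x K \ Z = {x} := by
  rw [insert_sdiff_of_notMem _ hx, sdiff_eq_empty_iff_subset.2 hK, insert_empty]

variable {α : Type*} [Fintype α] [DecidableEq α]

theorem exists_card_sdiff_eq_one {k : ℕ} {Z : Finset α} (hk : k ≤ #Z) (hZ : #Z < Fintype.card α) :
    ∃ A : Finset α, #A = k + 1 ∧ #(A \ Z) = 1 := by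
  obtain ⟨K, hKZ, hKk⟩ := exists_subset_card_eq hk
  obtain ⟨x, hx⟩ : Zᶜ.Nonempty := card_pos.1 (by rw [card_compl]; omega)
  have hxZ : x ∉ Z := mem_compl.1 hx
  refine ⟨insert x K, ?_, by rw [insert_sdiff_eq_singleton hxZ hKZ, card_singleton]⟩
  rw [card_insert_of_notMem fun h => hxZ (hKZ h), hKk]

theorem SENumber_le_card {n k : ℕ} (hα : Fintype.card α = n) (hkn : k < n)
    (F : Finset (Finset α)) (hF : ∀ A ∈ F, #A = k + 1)
    (hcover : ∀ Z : Finset α, k ≤ #Z → #Z < n → ∃ A ∈ F, #(A \ Z) = 1) :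
    SENumber n (n - k - 1) ≤ #F := by
  let e := Fintype.equivFinOfCardEq hα
  let S := F.image fun A => (A.map e.toEmbedding)ᶜ
  have hS : IsSESystem n (n - k - 1) S := by
    refine ⟨?_, fun X hX1 hXt => ?_⟩
    · simp only [S, mem_image]
      rintro _ ⟨A, hA, rfl⟩
      rw [card_compl, card_map, hF A hA, Fintype.card_fin]
      omega
    · have hcard : #(X.map e.symm.toEmbedding)ᶜ = n - #X := by
        rw [card_compl, card_map, hα]
      obtain ⟨A, hA, hAZ⟩ := hcover (X.map e.symm.toEmbedding)ᶜ (by omega) (by omega)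
      refine ⟨_, mem_image_of_mem _ hA, ?_⟩
      rw [← hAZ, ← card_map e.toEmbedding]
      congr 1
      ext x
      simp [and_comm]
  exact (Nat.sInf_le ⟨S, hS, rfl⟩ : SENumber n (n - k - 1) ≤ #S).trans card_image_le

def uncovered (k : ℕ) (F : Finset (Finset α)) : Finset (Finset α) :=
  {Z | k ≤ #Z ∧ #Z < Fintype.card α ∧ ∀ A ∈ F, #(A \ Z) ≠ 1}

theorem SENumber_le_card_add_card_uncovered {n k : ℕ} (hα : Fintype.card α = n) (hkn : k < n)
    (F : Finset (Finset α)) (hF : ∀ A ∈ F, #A = k + 1) :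
    SENumber n (n - k - 1) ≤ #F + #(uncovered k F) := by
  have hpatch : ∀ Z ∈ uncovered k F, ∃ A : Finset α, #A = k + 1 ∧ #(A \ Z) = 1 := fun Z hZ =>
    have hZ := (mem_filter.1 hZ).2
    exists_card_sdiff_eq_one hZ.1 hZ.2.1
  choose! patch hpatch using hpatch
  refine (SENumber_le_card hα hkn (F ∪ (uncovered k F).image patch) ?_ ?_).trans
    ((card_union_le _ _).trans (Nat.add_le_add_left card_image_le _))
  · simp only [mem_union, mem_image]
    rintro A (hA | ⟨Z, hZ, rfl⟩)
    exacts [hF A hA, (hpatch Z hZ).1]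
  · intro Z hZk hZn
    by_cases hZ : Z ∈ uncovered k F
    · exact ⟨patch Z, mem_union_right _ (mem_image_of_mem _ hZ), (hpatch Z hZ).2⟩
    · simp only [uncovered, mem_filter, mem_univ, true_and, not_and, not_forall, not_not] at hZ
      obtain ⟨A, hA, hAZ⟩ := hZ hZk (hα ▸ hZn)
      exact ⟨A, mem_union_left _ hA, hAZ⟩

end Complements

def halves {G : Type*} [AddGroup G] [Fintype G] [DecidableEq G] (c : G) : Finset G :=
  {x | x + x = c}

theorem card_halves_le {G : Type*} [AddCommGroup G] [Fintype G] [DecidableEq G] [IsAddCyclic G]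
    (c : G) : #(halves c) ≤ 2 := by
  obtain h | ⟨x₀, hx₀⟩ := (halves c).eq_empty_or_nonempty
  · simp [h]
  refine le_trans ?_ (IsAddCyclic.card_nsmul_eq_zero_le (α := G) two_pos)
  refine card_le_card_of_injOn (· - x₀) (fun x hx => ?_) sub_left_injective.injOn
  simp only [halves, coe_filter, mem_filter, mem_univ, true_and, Set.mem_ofPred_eq] at hx hx₀ ⊢
  rw [two_nsmul, sub_add_sub_comm, hx, hx₀, sub_self]

section ZMod

variable {n : ℕ}

def IsSumClosed (k : ℕ) (ρ : ZMod n) (Z : Finset (ZMod n)) : Prop :=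
  ∀ K ⊆ Z, #K = k → ρ - ∑ a ∈ K, a ∈ Z ∧ ρ + 1 - ∑ a ∈ K, a ∈ Z

theorem sub_sum_mem_of_add_one_notMem {k : ℕ} {ρ : ZMod n} {Z K : Finset (ZMod n)}
    {z : ZMod n} (hZ : IsSumClosed k ρ Z) (hz1 : z + 1 ∉ Z) (hKZ : K ⊆ Z)
    (hKk : #K = k) (hzK : z ∈ K) : ρ - ∑ a ∈ K, a ∈ K := by
  -- otherwise trading `z` for `ρ - ∑ K` gives a `k`-subset with sum `ρ - z`, forcing `z + 1 ∈ Z`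
  by_contra hδ
  have hδ' : ρ - ∑ a ∈ K, a ∉ K.erase z := fun h => hδ (mem_of_mem_erase h)
  have hcard : #(insert (ρ - ∑ a ∈ K, a) (K.erase z)) = k := by
    rw [card_insert_of_notMem hδ', card_erase_of_mem hzK, hKk]
    have := card_pos.2 ⟨z, hzK⟩
    omega
  have := (hZ _ (insert_subset (hZ K hKZ hKk).1 ((erase_subset _ _).trans hKZ)) hcard).2
  rw [sum_insert hδ', sum_erase_eq_sub hzK] at this
  exact hz1 (by convert this using 1; ring)

variable [NeZero n]

def sumBlocks (k : ℕ) (ρ : ZMod n) : Finset (Finset (ZMod n)) :=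
  (univ.powersetCard (k + 1)).filter fun A => ∑ a ∈ A, a = ρ ∨ ∑ a ∈ A, a = ρ + 1

theorem sum_card_sumBlocks_le (k : ℕ) : ∑ ρ : ZMod n, #(sumBlocks k ρ) ≤ 2 * n.choose (k + 1) := by
  calc ∑ ρ : ZMod n, #(sumBlocks k ρ)
      = ∑ A ∈ univ.powersetCard (k + 1),
          #{ρ : ZMod n | ∑ a ∈ A, a = ρ ∨ ∑ a ∈ A, a = ρ + 1} :=
        sum_card_bipartiteAbove_eq_sum_card_bipartiteBelow _
    _ ≤ ∑ _A ∈ univ.powersetCard (k + 1), 2 := by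
        refine sum_le_sum fun A _ => (card_le_card (t := {∑ a ∈ A, a, ∑ a ∈ A, a - 1}) ?_).trans
          card_le_two
        intro ρ
        simp only [mem_filter, mem_univ, true_and, mem_insert, mem_singleton]
        rintro (h | h)
        · exact .inl h.symm
        · exact .inr (by rw [h]; ring)
    _ = 2 * n.choose (k + 1) := by
        rw [sum_const, card_powersetCard, card_univ, ZMod.card, smul_eq_mul, mul_comm]

theorem exists_card_sumBlocks_le (k : ℕ) :
    ∃ ρ : ZMod n, (k + 1) * #(sumBlocks k ρ) ≤ 2 * n.choose k := by
  obtain ⟨ρ, -, hρ⟩ := exists_le_of_sum_le (univ_nonempty (α := ZMod n))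
    (f := fun ρ => n * #(sumBlocks k ρ)) (g := fun _ => 2 * n.choose (k + 1)) (by
      rw [← mul_sum, sum_const, card_univ, ZMod.card, smul_eq_mul]
      exact Nat.mul_le_mul_left n (sum_card_sumBlocks_le k))
  refine ⟨ρ, Nat.le_of_mul_le_mul_left ?_ (NeZero.pos n)⟩
  calc n * ((k + 1) * #(sumBlocks k ρ))
      = (k + 1) * (n * #(sumBlocks k ρ)) := by ring
    _ ≤ (k + 1) * (2 * n.choose (k + 1)) := Nat.mul_le_mul_left _ hρ
    _ = 2 * (n.choose k * (n - k)) := by rw [← Nat.choose_succ_right_eq]; ring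
    _ ≤ 2 * (n.choose k * n) := by gcongr; omega
    _ = n * (2 * n.choose k) := by ring

theorem isSumClosed_of_mem_uncovered {k : ℕ} {ρ : ZMod n} {Z : Finset (ZMod n)}
    (hZ : Z ∈ uncovered k (sumBlocks k ρ)) : IsSumClosed k ρ Z := by
  intro K hKZ hKk
  have hmem : ∀ x ∉ Z, ∑ a ∈ K, a + x ≠ ρ ∧ ∑ a ∈ K, a + x ≠ ρ + 1 := by
    intro x hxZ
    have hxK : x ∉ K := fun h => hxZ (hKZ h)
    have hA := (mem_filter.1 hZ).2.2.2 (insert x K)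
    rw [insert_sdiff_eq_singleton hxZ hKZ, card_singleton, sumBlocks, mem_filter,
      mem_powersetCard_univ, card_insert_of_notMem hxK, sum_insert hxK, add_comm x] at hA
    simpa [hKk] using hA
  constructor <;> by_contra h
  exacts [(hmem _ h).1 (by ring), (hmem _ h).2 (by ring)]

theorem exists_mem_add_one_notMem {Z : Finset (ZMod n)} (hne : Z.Nonempty) (hZ : Z ≠ univ) :
    ∃ z ∈ Z, z + 1 ∉ Z := by
  by_contra! h
  obtain ⟨z₀, hz₀⟩ := hne
  have hstep : ∀ m : ℕ, z₀ + m ∈ Z := by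
    intro m
    induction m with
    | zero => simpa using hz₀
    | succ m ih => simpa [add_assoc] using h _ ih
  refine hZ (eq_univ_of_forall fun w => ?_)
  simpa using hstep (w - z₀).val

/-- With `δ = ρ - ∑ K`: `K` and the `b` with `δ + a - b ∈ insert b K` for some `a ∈ K`, where
`δ + a - b` is `ρ - ∑` of `K` with `a` traded for `b`. -/
def envelope (ρ : ZMod n) (K : Finset (ZMod n)) : Finset (ZMod n) :=
  K ∪ K.biUnion fun a => halves (ρ - ∑ b ∈ K, b + a) ∪ K.image fun c => ρ - ∑ b ∈ K, b + a - c

theorem card_envelope_le (ρ : ZMod n) (K : Finset (ZMod n)) :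
    #(envelope ρ K) ≤ #K + #K * (2 + #K) :=
  (card_union_le _ _).trans <| Nat.add_le_add_left (card_biUnion_le_card_mul _ _ _ fun _ _ =>
    (card_union_le _ _).trans (Nat.add_le_add (card_halves_le _) card_image_le)) _

theorem exists_subset_envelope {k : ℕ} {ρ : ZMod n} {Z : Finset (ZMod n)} (hk : 0 < k)
    (hZ : IsSumClosed k ρ Z) (hkZ : k ≤ #Z) (hZn : #Z < n) :
    ∃ K ⊆ Z, #K = k ∧ ρ - ∑ a ∈ K, a ∈ K ∧ Z ⊆ envelope ρ K := by
  obtain ⟨z, hz, hz1⟩ := exists_mem_add_one_notMem (card_pos.1 (by omega : 0 < #Z))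
    (fun h => by simp [h] at hZn)
  obtain ⟨K, hzK, hKZ, hKk⟩ :=
    exists_subsuperset_card_eq (singleton_subset_iff.2 hz) (by rwa [card_singleton]) hkZ
  rw [singleton_subset_iff] at hzK
  have hδ := sub_sum_mem_of_add_one_notMem hZ hz1 hKZ hKk hzK
  refine ⟨K, hKZ, hKk, hδ, fun b hb => ?_⟩
  simp only [envelope, mem_union, mem_biUnion, mem_image]
  by_cases hbK : b ∈ K
  · exact .inl hbK
  obtain ⟨a, haK, haz⟩ : ∃ a ∈ K, a ≠ z := by
    by_contra! h
    -- `K = {z}`, so the anchor is `z` and closedness puts `z + 1` into `Z`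
    refine hz1 ?_
    convert (hZ K hKZ hKk).2 using 1
    rw [← h _ hδ]
    ring
  have hb' : b ∉ K.erase a := fun h => hbK (mem_of_mem_erase h)
  have hδb := sub_sum_mem_of_add_one_notMem hZ hz1 (insert_subset hb ((erase_subset _ _).trans hKZ))
    (by rw [card_insert_of_notMem hb', card_erase_of_mem haK, hKk]; omega)
    (mem_insert_of_mem (mem_erase.2 ⟨haz.symm, hzK⟩))
  rw [sum_insert hb', sum_erase_eq_sub haK] at hδb
  refine .inr ⟨a, haK, ?_⟩
  rcases mem_insert.1 hδb with h | h
  · exact .inl (by simp only [halves, mem_filter, mem_univ, true_and]; linear_combination -h)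
  · exact .inr ⟨_, mem_of_mem_erase h, by ring⟩

theorem card_uncovered_sumBlocks_le {k : ℕ} (hk : 0 < k) (ρ : ZMod n) :
    #(uncovered k (sumBlocks k ρ)) ≤ n.choose (k - 1) * (2 * 2 ^ (k + k * (2 + k))) := by
  have hsub : uncovered k (sumBlocks k ρ) ⊆ (univ.powersetCard (k - 1)).biUnion fun E =>
      (halves (ρ - ∑ a ∈ E, a)).biUnion fun δ => (envelope ρ (insert δ E)).powerset := by
    intro Z hZ
    obtain ⟨hkZ, hZn, -⟩ := (mem_filter.1 hZ).2
    rw [ZMod.card] at hZn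
    obtain ⟨K, hKZ, hKk, hδ, hZK⟩ :=
      exists_subset_envelope hk (isSumClosed_of_mem_uncovered hZ) hkZ hZn
    simp only [mem_biUnion, mem_powersetCard_univ, mem_powerset]
    refine ⟨K.erase (ρ - ∑ a ∈ K, a), by rw [card_erase_of_mem hδ, hKk], _, ?_,
      by rwa [insert_erase hδ]⟩
    simp only [halves, mem_filter, mem_univ, true_and, sum_erase_eq_sub hδ]
    ring
  refine (card_le_card hsub).trans <| (card_biUnion_le_card_mul _ _ _ fun E hE => ?_).trans
    (by rw [card_powersetCard, card_univ, ZMod.card])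
  refine (card_biUnion_le_card_mul _ _ _ fun δ _ => ?_).trans
    (Nat.mul_le_mul_right _ (card_halves_le _))
  have hcard : #(insert δ E) ≤ k := (card_insert_le _ _).trans (by
    rw [mem_powersetCard_univ.1 hE]; omega)
  rw [card_powerset]
  exact Nat.pow_le_pow_right two_pos ((card_envelope_le _ _).trans
    (Nat.add_le_add hcard (Nat.mul_le_mul hcard (Nat.add_le_add_left hcard 2))))

end ZMod

end SingleExclusion

open SingleExclusion in
theorem stmt6 (k : ℕ) (hk : 0 < k) :
    ∃ C : ℝ, ∃ N : ℕ, ∀ n : ℕ, N ≤ n → k + 1 < n →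
      (SENumber n (n - k - 1) : ℝ) ≤
        (2 / ((k : ℝ) + 1)) * (n.choose k : ℝ) + C * (n : ℝ) ^ (k - 1) := by
  refine ⟨2 * 2 ^ (k + k * (2 + k)), 0, fun n _ hkn => ?_⟩
  have : NeZero n := ⟨by omega⟩
  obtain ⟨ρ, hρ⟩ := exists_card_sumBlocks_le (n := n) k
  have hSE := SENumber_le_card_add_card_uncovered (ZMod.card n) (by omega) (sumBlocks k ρ)
    fun A hA => mem_powersetCard_univ.1 (mem_filter.1 hA).1
  have hbad := (card_uncovered_sumBlocks_le hk ρ).trans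
    (Nat.mul_le_mul_right _ (Nat.choose_le_pow n (k - 1)))
  have hblocks : (#(sumBlocks k ρ) : ℝ) ≤ 2 / ((k : ℝ) + 1) * (n.choose k : ℝ) := by
    rw [div_mul_eq_mul_div, le_div_iff₀ (by positivity), mul_comm]
    exact_mod_cast hρ
  calc (SENumber n (n - k - 1) : ℝ)
      ≤ #(sumBlocks k ρ) + #(uncovered k (sumBlocks k ρ)) := by exact_mod_cast hSE
    _ ≤ _ := add_le_add hblocks (by rw [mul_comm]; exact_mod_cast hbad)
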